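/- A loop L is a C-loop if and only if L is a right alternative LC-loop. -/
import Mathlib


theorem stmt {L : Type*} (mul : L → L → L) (e : L)
    (hid : ∀ x, mul e x = x ∧ mul x e = x)
    (hLbij : ∀ a, Function.Bijective (fun x => mul a x))
    (hRbij : ∀ a, Function.Bijective (fun x => mul x a)) :
    (∀ x y z, mul x (mul y (mul y z)) = mul (mul (mul x y) y) z) ↔
      ((∀ x y, mul (mul x y) y = mul x (mul y y)) ∧
        (∀ x y z, mul x (mul y (mul y z)) = mul (mul x (mul y y)) z)) := by
  constructor
  · intro hC
    have hRA : ∀ x y, mul (mul x y) y = mul x (mul y y) := by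
      intro x y
      have := hC x y e
      simpa [(hid y).2, (hid (mul (mul x y) y)).2] using this.symm
    exact ⟨hRA, fun x y z => by rw [hC, hRA]⟩
  · rintro ⟨hRA, hLC⟩ x y z
    rw [hLC, hRA]
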